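/- Let 𝓜 be a finite nonempty model class admitting a model estimation representation with constant L ≥ 1. Then for every γ > 0 and every μ̄ ∈ Δ(𝓜), amdec_γ(𝓜, μ̄) ≤ 2H · max_{M̄∈𝓜} max_{0≤h≤H} dc( G_h^{M̄}, γ/(2HL²) ). -/

import Mathlib

open MeasureTheory ProbabilityTheory

noncomputable section

/-- Squared Hellinger distance between two measures, computed with respect to the
(dominating) measure `P + Q`. -/
def hellingerSq {Ω : Type*} [MeasurableSpace Ω] (P Q : Measure Ω) : ℝ :=
  ∫ x, (Real.sqrt ((P.rnDeriv (P + Q) x).toReal)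
      - Real.sqrt ((Q.rnDeriv (P + Q) x).toReal)) ^ 2 ∂(P + Q)

/-- Total variation distance between two measures, computed with respect to the
(dominating) measure `P + Q`. -/
def tvDist {Ω : Type*} [MeasurableSpace Ω] (P Q : Measure Ω) : ℝ :=
  (1 / 2) * ∫ x, |(P.rnDeriv (P + Q) x).toReal - (Q.rnDeriv (P + Q) x).toReal| ∂(P + Q)

/-- A model in the DMSO framework. -/
structure Model (O : Type*) [MeasurableSpace O] (H : ℕ) (Pol : Type*) where
  P : Pol → Measure O
  prob : ∀ π, IsProbabilityMeasure (P π)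
  R : O → Fin H → ℝ
  measR : ∀ h, Measurable fun o => R o h
  R_nonneg : ∀ o h, 0 ≤ R o h
  R_le_one : ∀ o h, R o h ≤ 1
  sumR_le_one : ∀ o, ∑ h, R o h ≤ 1

variable {O : Type*} [MeasurableSpace O] {H : ℕ} {Pol : Type*}

/-- The divergence `D_RL²(M(π), M'(π))`. -/
def DRL2 (M M' : Model O H Pol) (π : Pol) : ℝ :=
  hellingerSq (M.P π) (M'.P π)
    + ∫ o, (∑ h, (M.R o h - M'.R o h) ^ 2) ∂(M.P π)

/-- The divergence `D̃_RL(M(π), M'(π))`: total variation distance of observation laws plus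
expected ℓ₁-distance of the mean-reward vectors. -/
def DRLtilde (M M' : Model O H Pol) (π : Pol) : ℝ :=
  tvDist (M.P π) (M'.P π)
    + ∫ o, (∑ h, |M.R o h - M'.R o h|) ∂(M.P π)

/-- The set `Δ(ι)` of probability distributions on a finite set `ι`. -/
def ProbDist (ι : Type*) [Fintype ι] : Type _ :=
  {p : ι → ℝ // (∀ i, 0 ≤ p i) ∧ ∑ i, p i = 1}

variable [Fintype Pol] {ι : Type*} [Fintype ι]

/-- The All-policy Model-estimation DEC `amdec_γ(𝓜, μ̄)`. -/
def amdec (γ : ℝ) (Mdl : ι → Model O H Pol) (μbar : ProbDist ι) : ℝ :=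
  ⨅ pexp : ProbDist Pol, ⨅ μout : ProbDist ι, ⨆ i : ι, ⨆ πbar : Pol,
    (∑ j, μout.1 j * DRLtilde (Mdl i) (Mdl j) πbar)
      - γ * ∑ π, pexp.1 π * ∑ j, μbar.1 j * DRL2 (Mdl i) (Mdl j) π

/-- The decoupling coefficient `dc(G_h^{M̄}, η)` of the function class
`G_h^{M̄} = {τ ↦ g_h^{M;M̄}(τ) : M ∈ 𝓜}` over the finite index set `Tset h`. -/
def dcG {Tidx : Fin (H + 1) → Type} [∀ h, Fintype (Tidx h)]
    (g : (h : Fin (H + 1)) → ι → ι → Tidx h → ℝ)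
    (h : Fin (H + 1)) (jbar : ι) (η : ℝ) : ℝ :=
  ⨆ ν : ProbDist (ι × Tidx h),
    (∑ p, ν.1 p * |g h p.1 jbar p.2|)
      - η * ∑ p, ∑ q, ν.1 p * ν.1 q * (g h p.1 jbar q.2) ^ 2


section MeasLemmas
variable {Ω : Type*} [MeasurableSpace Ω]

lemma tvDist_nonneg (P Q : Measure Ω) : 0 ≤ tvDist P Q :=
  mul_nonneg (by norm_num) (integral_nonneg fun x => abs_nonneg _)

lemma hellingerSq_nonneg (P Q : Measure Ω) : 0 ≤ hellingerSq P Q :=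
  integral_nonneg fun x => sq_nonneg _

lemma hellingerSq_self (P : Measure Ω) : hellingerSq P P = 0 := by
  simp [hellingerSq]

lemma hellingerSq_le_four (P Q : Measure Ω) [IsProbabilityMeasure P] [IsProbabilityMeasure Q] :
    hellingerSq P Q ≤ 4 := by
  set ν : Measure Ω := P + Q with hν
  have haP : P ≪ ν := Measure.absolutelyContinuous_of_le (Measure.le_add_right le_rfl)
  have haQ : Q ≪ ν := Measure.absolutelyContinuous_of_le (Measure.le_add_left le_rfl)
  set a : Ω → ℝ := fun x => (P.rnDeriv ν x).toReal with hadef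
  set b : Ω → ℝ := fun x => (Q.rnDeriv ν x).toReal with hbdef
  have ha_int : Integrable a ν := Measure.integrable_toReal_rnDeriv
  have hb_int : Integrable b ν := Measure.integrable_toReal_rnDeriv
  have ha_nonneg : ∀ x, 0 ≤ a x := fun x => ENNReal.toReal_nonneg
  have hb_nonneg : ∀ x, 0 ≤ b x := fun x => ENNReal.toReal_nonneg
  have hpt : ∀ x, (Real.sqrt (a x) - Real.sqrt (b x)) ^ 2 ≤ 2 * a x + 2 * b x := by
    intro x
    have h1 : Real.sqrt (a x) ^ 2 = a x := Real.sq_sqrt (ha_nonneg x)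
    have h2 : Real.sqrt (b x) ^ 2 = b x := Real.sq_sqrt (hb_nonneg x)
    nlinarith [sq_nonneg (Real.sqrt (a x) + Real.sqrt (b x))]
  have hmeas : AEStronglyMeasurable (fun x => (Real.sqrt (a x) - Real.sqrt (b x)) ^ 2) ν := by
    apply Measurable.aestronglyMeasurable
    apply Measurable.pow_const
    exact ((Real.continuous_sqrt.measurable.comp
        (Measure.measurable_rnDeriv P ν).ennreal_toReal).sub
      (Real.continuous_sqrt.measurable.comp
        (Measure.measurable_rnDeriv Q ν).ennreal_toReal))
  have hint : Integrable (fun x => (Real.sqrt (a x) - Real.sqrt (b x)) ^ 2) ν := by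
    refine Integrable.mono' ((ha_int.const_mul 2).add (hb_int.const_mul 2)) hmeas ?_
    filter_upwards with x
    rw [Real.norm_eq_abs, abs_of_nonneg (sq_nonneg _)]
    exact hpt x
  have : hellingerSq P Q ≤ ∫ x, (2 * a x + 2 * b x) ∂ν :=
    integral_mono hint ((ha_int.const_mul 2).add (hb_int.const_mul 2)) hpt
  refine this.trans ?_
  rw [integral_add (ha_int.const_mul 2) (hb_int.const_mul 2), integral_const_mul, integral_const_mul, Measure.integral_toReal_rnDeriv haP, Measure.integral_toReal_rnDeriv haQ]
  simp
  norm_num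

end MeasLemmas

section DLemmas
variable {O : Type*} [MeasurableSpace O] {H : ℕ} {Pol : Type*}

lemma DRL2_nonneg (M M' : Model O H Pol) (π : Pol) : 0 ≤ DRL2 M M' π :=
  add_nonneg (hellingerSq_nonneg _ _)
    (integral_nonneg fun o => Finset.sum_nonneg fun h _ => sq_nonneg _)

lemma DRL2_self (M : Model O H Pol) (π : Pol) : DRL2 M M π = 0 := by
  simp [DRL2, hellingerSq_self]

lemma DRLtilde_nonneg (M M' : Model O H Pol) (π : Pol) : 0 ≤ DRLtilde M M' π :=
  add_nonneg (tvDist_nonneg _ _)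
    (integral_nonneg fun o => Finset.sum_nonneg fun h _ => abs_nonneg _)

lemma DRL2_le (M M' : Model O H Pol) (π : Pol) : DRL2 M M' π ≤ 4 + H := by
  haveI := M.prob π
  haveI := M'.prob π
  have h1 : hellingerSq (M.P π) (M'.P π) ≤ 4 := hellingerSq_le_four _ _
  have h2 : (∫ o, (∑ h, (M.R o h - M'.R o h) ^ 2) ∂(M.P π)) ≤ H := by
    have hpt : ∀ o, (∑ h, (M.R o h - M'.R o h) ^ 2) ≤ (H : ℝ) := by
      intro o
      calc (∑ h, (M.R o h - M'.R o h) ^ 2) ≤ ∑ _h : Fin H, (1 : ℝ) := by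
            refine Finset.sum_le_sum fun h _ => ?_
            have := M.R_nonneg o h; have := M.R_le_one o h
            have := M'.R_nonneg o h; have := M'.R_le_one o h
            nlinarith
        _ = H := by simp
    have hmeas : AEStronglyMeasurable (fun o => ∑ h, (M.R o h - M'.R o h) ^ 2) (M.P π) := by
      apply Measurable.aestronglyMeasurable
      exact Finset.measurable_sum _ fun h _ => ((M.measR h).sub (M'.measR h)).pow_const 2
    have hint : Integrable (fun o => ∑ h, (M.R o h - M'.R o h) ^ 2) (M.P π) := by
      refine Integrable.mono' (integrable_const (H : ℝ)) hmeas ?_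
      filter_upwards with o
      rw [Real.norm_eq_abs, abs_of_nonneg (Finset.sum_nonneg fun h _ => sq_nonneg _)]
      exact hpt o
    calc (∫ o, (∑ h, (M.R o h - M'.R o h) ^ 2) ∂(M.P π))
        ≤ ∫ _o, (H : ℝ) ∂(M.P π) := integral_mono hint (integrable_const _) hpt
      _ = H := by simp
  have := add_le_add h1 h2
  simpa [DRL2] using this

end DLemmas
open MeasureTheory

noncomputable section

/-- Separation-based mixture extraction (hard direction of the minimax theorem). -/
lemma exists_mixture {A : Type*} [Fintype A] [Nonempty A] {X : Type*} (F : X → A → ℝ)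
    (x₀ : X)
    (hconv : ∀ x₁ x₂ : X, ∀ t : ℝ, 0 ≤ t → t ≤ 1 →
      ∃ x : X, ∀ a, F x a = t * F x₁ a + (1 - t) * F x₂ a)
    (v : ℝ) (hv : ∀ x : X, ∃ a, v ≤ F x a) :
    ∃ μ : A → ℝ, (∀ a, 0 ≤ μ a) ∧ (∑ a, μ a = 1) ∧ ∀ x, v ≤ ∑ a, μ a * F x a := by
  classical
  set S : Set (A → ℝ) := {y | ∃ x, ∀ a, F x a ≤ y a} with hS
  set U : Set (A → ℝ) := {y | ∀ a, y a < v} with hU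
  have hSconv : Convex ℝ S := by
    rintro y₁ ⟨x₁, hx₁⟩ y₂ ⟨x₂, hx₂⟩ t s ht hs hts
    obtain ⟨x, hx⟩ := hconv x₁ x₂ t ht (by linarith)
    refine ⟨x, fun a => ?_⟩
    have : (1 : ℝ) - t = s := by linarith
    rw [hx a, this]
    have h1 := hx₁ a; have h2 := hx₂ a
    simp only [Pi.add_apply, Pi.smul_apply, smul_eq_mul]
    nlinarith
  have hUconv : Convex ℝ U := by
    have : U = ⋂ a, {y : A → ℝ | y a < v} := by
      ext y; simp [hU]
    rw [this]
    exact convex_iInter fun a =>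
      convex_halfSpace_lt (IsLinearMap.mk (fun y z => rfl) (fun c y => rfl)) v
  have hUopen : IsOpen U := by
    have : U = ⋂ a, (fun y : A → ℝ => y a) ⁻¹' Set.Iio v := by
      ext y; simp [hU]
    rw [this]
    exact isOpen_iInter_of_finite fun a => (continuous_apply a).isOpen_preimage _ isOpen_Iio
  have hdisj : Disjoint U S := by
    rw [Set.disjoint_left]
    rintro y hyU ⟨x, hx⟩
    obtain ⟨a, ha⟩ := hv x
    exact absurd (lt_of_le_of_lt (ha.trans (hx a)) (hyU a)) (lt_irrefl _)
  obtain ⟨φ, u, hφU, hφS⟩ := geometric_hahn_banach_open hUconv hUopen hSconv hdisj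
  set w : A → ℝ := fun a => φ (Pi.single a 1) with hw
  have hφ_eq : ∀ y : A → ℝ, φ y = ∑ a, w a * y a := by
    intro y
    have hy : y = ∑ a, (y a) • (Pi.single a (1 : ℝ) : A → ℝ) := by
      funext b
      simp [Pi.single_apply, Finset.sum_apply]
    calc φ y = φ (∑ a, (y a) • (Pi.single a (1 : ℝ) : A → ℝ)) := by rw [← hy]
      _ = ∑ a, (y a) * φ (Pi.single a 1) := by
          rw [map_sum]; exact Finset.sum_congr rfl fun a _ => by rw [φ.map_smul]; rfl
      _ = ∑ a, w a * y a := Finset.sum_congr rfl fun a _ => mul_comm _ _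
  have hconstU : ∀ ε : ℝ, 0 < ε → (fun _ : A => v - ε) ∈ U := fun ε hε a => by
    simp; linarith
  have hc : φ (fun _ => v - 1) < u := hφU _ (hconstU 1 one_pos)
  have hw_nonneg : ∀ a, 0 ≤ w a := by
    intro a
    by_contra hneg
    push_neg at hneg
    set c := φ (fun _ : A => v - 1) with hcdef
    set t : ℝ := (u - c + 1) / (-w a) with htdef
    have htpos : 0 < t := div_pos (by linarith) (by linarith)
    have hyU : ((fun _ : A => v - 1) - t • (Pi.single a (1:ℝ) : A → ℝ)) ∈ U := by
      intro b
      simp only [Pi.sub_apply, Pi.smul_apply, smul_eq_mul, Pi.single_apply]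
      by_cases hb : b = a
      · simp only [Pi.single_apply, if_pos hb, mul_one]
        linarith
      · simp only [Pi.single_apply, if_neg hb, mul_zero, sub_zero]
        linarith
    have := hφU _ hyU
    rw [map_sub, φ.map_smul] at this
    have hwn : -w a ≠ 0 := ne_of_gt (by linarith)
    have hts0 : t * -w a = u - c + 1 := by
      rw [htdef]; exact div_mul_cancel₀ _ hwn
    have hts : t * w a = -(u - c + 1) := by
      have h1 : t * w a = -(t * -w a) := by ring
      rw [h1, hts0]
    simp only [smul_eq_mul, ← hw] at this
    rw [hts] at this
    simp only [← hcdef] at this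
    linarith
  have hs_pos : 0 < ∑ a, w a := by
    rcases lt_or_eq_of_le (Finset.sum_nonneg fun a _ => hw_nonneg a) with h | h
    · exact h
    · exfalso
      have hall : ∀ a ∈ Finset.univ, w a = 0 :=
        (Finset.sum_eq_zero_iff_of_nonneg fun a _ => hw_nonneg a).mp h.symm
      have hphi0 : ∀ y, φ y = 0 := by
        intro y; rw [hφ_eq]
        exact Finset.sum_eq_zero fun a _ => by rw [hall a (Finset.mem_univ a), zero_mul]
      have h1 : (0:ℝ) < u := by have := hφU _ (hconstU 1 one_pos); rwa [hphi0] at this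
      have h2 : u ≤ 0 := by
        have : (F x₀) ∈ S := ⟨x₀, fun a => le_rfl⟩
        have := hφS _ this; rwa [hphi0] at this
      linarith
  have hvs : v * (∑ a, w a) ≤ u := by
    by_contra hlt
    push_neg at hlt
    set ε := (v * (∑ a, w a) - u) / (2 * (∑ a, w a)) with hε
    have hεpos : 0 < ε := div_pos (by linarith) (by linarith)
    have := hφU _ (hconstU ε hεpos)
    rw [hφ_eq] at this
    have hsum : ∑ a, w a * (v - ε) = (v - ε) * ∑ a, w a := by
      rw [Finset.mul_sum]; exact Finset.sum_congr rfl fun a _ => mul_comm _ _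
    rw [hsum] at this
    have heq : ε * (∑ a, w a) = (v * (∑ a, w a) - u)/2 := by
      rw [hε]; field_simp
    nlinarith [this, heq]
  refine ⟨fun a => w a / (∑ b, w b), fun a => div_nonneg (hw_nonneg a) hs_pos.le,
    by rw [← Finset.sum_div]; exact div_self hs_pos.ne', fun x => ?_⟩
  have hmem : (F x) ∈ S := ⟨x, fun a => le_rfl⟩
  have hx := hφS _ hmem
  rw [hφ_eq] at hx
  have : ∑ a, w a / (∑ b, w b) * F x a = (∑ a, w a * F x a) / (∑ b, w b) := by
    rw [Finset.sum_div]; exact Finset.sum_congr rfl fun a _ => by ring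
  rw [this, le_div_iff₀ hs_pos]
  calc v * ∑ b, w b ≤ u := hvs
    _ ≤ ∑ a, w a * F x a := hx

section SumLemmas
variable {α β : Type*} [Fintype α] [Fintype β]

lemma sum_swap_mul (u : α → ℝ) (v : β → ℝ) (S : α → β → ℝ) :
    ∑ a, u a * ∑ b, v b * S a b = ∑ b, v b * ∑ a, u a * S a b := by
  simp only [Finset.mul_sum]
  rw [Finset.sum_comm]
  exact Finset.sum_congr rfl fun b _ => Finset.sum_congr rfl fun a _ => by ring

lemma mul_sum_swap (u : α → ℝ) (T : α → β → ℝ) :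
    ∑ a, u a * ∑ b, T a b = ∑ b, ∑ a, u a * T a b := by
  simp only [Finset.mul_sum]
  rw [Finset.sum_comm]

end SumLemmas

instance ProbDist.instNonempty {κ : Type*} [Fintype κ] [Nonempty κ] :
    Nonempty (ProbDist κ) := by
  classical
  refine ⟨⟨fun _ => (Fintype.card κ : ℝ)⁻¹, fun _ => by positivity, ?_⟩⟩
  rw [Finset.sum_const, nsmul_eq_mul, Finset.card_univ]
  exact mul_inv_cancel₀ (by exact_mod_cast Fintype.card_ne_zero)

/-- Proposition (ME-DEC-bound): if the model class admits a model estimation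
representation with constant `L ≥ 1`, then for every `γ > 0` and every `μ̄ ∈ Δ(𝓜)`,
`amdec_γ(𝓜, μ̄) ≤ 2H · max_{M̄∈𝓜} max_{0 ≤ h ≤ H} dc(G_h^{M̄}, γ/(2HL²))`. -/
theorem amdec_le_dc_of_model_estimation_representation
    [Nonempty Pol] [Nonempty ι] (hH : 1 ≤ H)
    (Mdl : ι → Model O H Pol)
    -- the model estimation representation
    (Tidx : Fin (H + 1) → Type) [∀ h, Fintype (Tidx h)] [∀ h, Nonempty (Tidx h)]
    (dEst : (h : Fin (H + 1)) → ι → Pol → ProbDist (Tidx h))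
    (g : (h : Fin (H + 1)) → ι → ι → Tidx h → ℝ)
    (hg_bound : ∀ (h : Fin (H + 1)) (i jbar : ι) (τ : Tidx h), |g h i jbar τ| ≤ 1)
    (est : Fin (H + 1) → Pol → Pol)
    (L : ℝ) (hL : 1 ≤ L)
    (hrep1 : ∀ (i jbar : ι) (π : Pol),
      DRLtilde (Mdl i) (Mdl jbar) π
        ≤ ∑ h : Fin (H + 1), ∑ τ, (dEst h jbar π).1 τ * |g h i jbar τ|)
    (hrep2 : ∀ (h : Fin (H + 1)) (i jbar : ι) (π : Pol),
      (∑ τ, (dEst h jbar π).1 τ * (g h i jbar τ) ^ 2)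
        ≤ L ^ 2 * DRL2 (Mdl i) (Mdl jbar) (est h π))
    (γ : ℝ) (hγ : 0 < γ) (μbar : ProbDist ι) :
    amdec γ Mdl μbar
      ≤ 2 * H * ⨆ jbar : ι, ⨆ h : Fin (H + 1),
          dcG g h jbar (γ / (2 * H * L ^ 2)) := by
  classical
  have hH1 : (1:ℝ) ≤ (H:ℝ) := by exact_mod_cast hH
  have hHpos : (0:ℝ) < (H:ℝ) := by linarith
  have hLpos : (0:ℝ) < L := lt_of_lt_of_le one_pos hL
  set η : ℝ := γ / (2 * H * L ^ 2) with hηdef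
  have hηpos : 0 < η := div_pos hγ (by positivity)
  -- boundedness of the decoupling value family
  have hdc_bdd : ∀ (h : Fin (H+1)) (jbar : ι), BddAbove (Set.range fun ν : ProbDist (ι × Tidx h) =>
      (∑ p, ν.1 p * |g h p.1 jbar p.2|)
        - η * ∑ p, ∑ q, ν.1 p * ν.1 q * (g h p.1 jbar q.2) ^ 2) := by
    intro h jbar
    refine ⟨1, ?_⟩
    rintro _ ⟨ν, rfl⟩
    have h1 : (∑ p, ν.1 p * |g h p.1 jbar p.2|) ≤ 1 := by
      calc ∑ p, ν.1 p * |g h p.1 jbar p.2| ≤ ∑ p, ν.1 p * 1 :=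
            Finset.sum_le_sum fun p _ =>
              mul_le_mul_of_nonneg_left (hg_bound h p.1 jbar p.2) (ν.2.1 p)
        _ = 1 := by simp [ν.2.2]
    have h2 : 0 ≤ ∑ p, ∑ q, ν.1 p * ν.1 q * (g h p.1 jbar q.2) ^ 2 :=
      Finset.sum_nonneg fun p _ => Finset.sum_nonneg fun q _ =>
        mul_nonneg (mul_nonneg (ν.2.1 p) (ν.2.1 q)) (sq_nonneg _)
    have := mul_nonneg hηpos.le h2
    simp only [Set.mem_setOf_eq]
    linarith
  have hdc_ge : ∀ (h : Fin (H+1)) (jbar : ι) (ν : ProbDist (ι × Tidx h)),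
      (∑ p, ν.1 p * |g h p.1 jbar p.2|)
        - η * ∑ p, ∑ q, ν.1 p * ν.1 q * (g h p.1 jbar q.2) ^ 2
        ≤ dcG g h jbar η := fun h jbar ν => le_ciSup (hdc_bdd h jbar) ν
  -- nonnegativity of the decoupling coefficients
  have hdc_nonneg : ∀ (h : Fin (H+1)) (jbar : ι), 0 ≤ dcG g h jbar η := by
    intro h jbar
    obtain ⟨π₀⟩ := ‹Nonempty Pol›
    have hzero : ∀ τ, (dEst h jbar π₀).1 τ * (g h jbar jbar τ)^2 = 0 := by
      have hsum : ∑ τ, (dEst h jbar π₀).1 τ * (g h jbar jbar τ)^2 ≤ 0 := by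
        have := hrep2 h jbar jbar π₀
        rwa [DRL2_self, mul_zero] at this
      have hnn : ∀ τ ∈ Finset.univ, 0 ≤ (dEst h jbar π₀).1 τ * (g h jbar jbar τ)^2 :=
        fun τ _ => mul_nonneg ((dEst h jbar π₀).2.1 τ) (sq_nonneg _)
      intro τ
      exact (Finset.sum_eq_zero_iff_of_nonneg hnn).mp
        (le_antisymm hsum (Finset.sum_nonneg hnn)) τ (Finset.mem_univ τ)
    have habs : ∀ τ, (dEst h jbar π₀).1 τ * |g h jbar jbar τ| = 0 := by
      intro τ
      rcases mul_eq_zero.mp (hzero τ) with h0 | h0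
      · rw [h0, zero_mul]
      · rw [pow_eq_zero_iff (two_ne_zero)] at h0
        rw [h0, abs_zero, mul_zero]
    have hν_ex : ∃ ν : ProbDist (ι × Tidx h),
        ν.1 = fun p => if p.1 = jbar then (dEst h jbar π₀).1 p.2 else 0 := by
      refine ⟨⟨fun p => if p.1 = jbar then (dEst h jbar π₀).1 p.2 else 0, fun p => ?_, ?_⟩, rfl⟩
      · dsimp only; split
        · exact (dEst h jbar π₀).2.1 p.2
        · exact le_rfl
      · rw [Fintype.sum_prod_type]
        rw [Finset.sum_eq_single jbar]
        · simp [(dEst h jbar π₀).2.2]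
        · intro b _ hb; simp [hb]
        · intro hmem; exact absurd (Finset.mem_univ _) hmem
    obtain ⟨ν, hν⟩ := hν_ex
    have hA : (∑ p, ν.1 p * |g h p.1 jbar p.2|) = 0 := Finset.sum_eq_zero fun p _ => by
      simp only [hν]
      by_cases hp : p.1 = jbar
      · rw [hp, if_pos rfl]; exact habs p.2
      · rw [if_neg hp, zero_mul]
    have hQ : (∑ p, ∑ q, ν.1 p * ν.1 q * (g h p.1 jbar q.2)^2) = 0 :=
      Finset.sum_eq_zero fun p _ => Finset.sum_eq_zero fun q _ => by
        simp only [hν]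
        by_cases hp : p.1 = jbar
        · by_cases hq : q.1 = jbar
          · rw [hp, hq, if_pos rfl, if_pos rfl, mul_assoc, hzero q.2, mul_zero]
          · rw [if_neg hq, mul_zero, zero_mul]
        · rw [if_neg hp, zero_mul, zero_mul]
    have := hdc_ge h jbar ν
    rw [hA, hQ, mul_zero, sub_zero] at this
    exact this
  -- the supremum of decoupling coefficients
  set Dsup : ℝ := ⨆ jbar : ι, ⨆ h : Fin (H+1), dcG g h jbar η with hDsup
  have hdc_le_D : ∀ (jbar : ι) (h : Fin (H+1)), dcG g h jbar η ≤ Dsup := by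
    intro jbar h
    have h1 : dcG g h jbar η ≤ ⨆ h' : Fin (H+1), dcG g h' jbar η :=
      le_ciSup (f := fun h' : Fin (H+1) => dcG g h' jbar η)
        (Set.Finite.bddAbove (Set.finite_range _)) h
    exact h1.trans (le_ciSup (f := fun j : ι => ⨆ h' : Fin (H+1), dcG g h' j η)
      (Set.Finite.bddAbove (Set.finite_range _)) jbar)
  have hD_nonneg : 0 ≤ Dsup :=
    le_trans (hdc_nonneg 0 (Classical.arbitrary ι)) (hdc_le_D _ _)
  -- the payoff function
  set f : ProbDist Pol × ProbDist ι → ι × Pol → ℝ := fun x a =>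
    (∑ j, x.2.1 j * DRLtilde (Mdl a.1) (Mdl j) a.2)
      - γ * ∑ π, x.1.1 π * ∑ j, μbar.1 j * DRL2 (Mdl a.1) (Mdl j) π with hf
  have hf_lb : ∀ x a, -(γ * (4 + H)) ≤ f x a := by
    intro x a
    have h1 : 0 ≤ ∑ j, x.2.1 j * DRLtilde (Mdl a.1) (Mdl j) a.2 :=
      Finset.sum_nonneg fun j _ => mul_nonneg (x.2.2.1 j) (DRLtilde_nonneg _ _ _)
    have h3 : ∀ π : Pol, (∑ j, μbar.1 j * DRL2 (Mdl a.1) (Mdl j) π) ≤ 4 + H := by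
      intro π
      calc (∑ j, μbar.1 j * DRL2 (Mdl a.1) (Mdl j) π) ≤ ∑ j, μbar.1 j * (4 + H) :=
            Finset.sum_le_sum fun j _ =>
              mul_le_mul_of_nonneg_left (DRL2_le _ _ _) (μbar.2.1 j)
        _ = 4 + H := by rw [← Finset.sum_mul, μbar.2.2, one_mul]
    have h4 : (∑ π, x.1.1 π * ∑ j, μbar.1 j * DRL2 (Mdl a.1) (Mdl j) π) ≤ 4 + H := by
      calc (∑ π, x.1.1 π * ∑ j, μbar.1 j * DRL2 (Mdl a.1) (Mdl j) π)
          ≤ ∑ π, x.1.1 π * (4 + H) := Finset.sum_le_sum fun π _ =>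
              mul_le_mul_of_nonneg_left (h3 π) (x.1.2.1 π)
        _ = 4 + H := by rw [← Finset.sum_mul, x.1.2.2, one_mul]
    have h5 : γ * (∑ π, x.1.1 π * ∑ j, μbar.1 j * DRL2 (Mdl a.1) (Mdl j) π) ≤ γ * (4 + H) :=
      mul_le_mul_of_nonneg_left h4 hγ.le
    simp only [hf]
    linarith
  have hT_lb : ∀ x : ProbDist Pol × ProbDist ι,
      -(γ*(4+(H:ℝ))) ≤ ⨆ i : ι, ⨆ pb : Pol, f x (i, pb) := by
    intro x
    obtain ⟨i0⟩ := ‹Nonempty ι›; obtain ⟨π0⟩ := ‹Nonempty Pol›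
    calc -(γ*(4+(H:ℝ))) ≤ f x (i0, π0) := hf_lb x _
      _ ≤ ⨆ pb, f x (i0, pb) := le_ciSup (f := fun pb : Pol => f x (i0, pb))
          (Set.Finite.bddAbove (Set.finite_range _)) π0
      _ ≤ ⨆ i, ⨆ pb, f x (i, pb) := le_ciSup (f := fun i : ι => ⨆ pb : Pol, f x (i, pb))
          (Set.Finite.bddAbove (Set.finite_range _)) i0
  have hamdec_eq : amdec γ Mdl μbar
      = ⨅ pexp : ProbDist Pol, ⨅ μout : ProbDist ι, ⨆ i : ι, ⨆ pb : Pol,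
          f (pexp, μout) (i, pb) := by
    simp only [hf]; rfl
  have hamdec_le : ∀ x : ProbDist Pol × ProbDist ι,
      amdec γ Mdl μbar ≤ ⨆ i : ι, ⨆ pb : Pol, f x (i,pb) := by
    intro x
    have hb1 : BddBelow (Set.range fun μout : ProbDist ι =>
        ⨆ i : ι, ⨆ pb : Pol, f (x.1, μout) (i,pb)) :=
      ⟨-(γ*(4+(H:ℝ))), by rintro _ ⟨μout, rfl⟩; exact hT_lb _⟩
    have hb2 : BddBelow (Set.range fun pexp : ProbDist Pol =>
        ⨅ μout : ProbDist ι, ⨆ i : ι, ⨆ pb : Pol, f (pexp, μout) (i,pb)) :=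
      ⟨-(γ*(4+(H:ℝ))), by rintro _ ⟨pexp, rfl⟩; exact le_ciInf fun μout => hT_lb _⟩
    rw [hamdec_eq]
    calc (⨅ pexp : ProbDist Pol, ⨅ μout : ProbDist ι, ⨆ i : ι, ⨆ pb : Pol, f (pexp, μout) (i, pb))
        ≤ ⨅ μout : ProbDist ι, ⨆ i : ι, ⨆ pb : Pol, f (x.1, μout) (i,pb) := ciInf_le hb2 x.1
      _ ≤ ⨆ i : ι, ⨆ pb : Pol, f (x.1, x.2) (i,pb) := ciInf_le hb1 x.2
  have hv : ∀ x : ProbDist Pol × ProbDist ι, ∃ a : ι × Pol, amdec γ Mdl μbar ≤ f x a := by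
    intro x
    obtain ⟨a, ha⟩ := Finite.exists_max fun a : ι × Pol => f x a
    refine ⟨a, (hamdec_le x).trans ?_⟩
    exact ciSup_le fun i => ciSup_le fun pb => ha (i, pb)
  have hconv : ∀ x₁ x₂ : ProbDist Pol × ProbDist ι, ∀ t : ℝ, 0 ≤ t → t ≤ 1 →
      ∃ x, ∀ a, f x a = t * f x₁ a + (1-t) * f x₂ a := by
    intro x₁ x₂ t ht ht1
    have h1t : (0:ℝ) ≤ 1 - t := by linarith
    refine ⟨(⟨fun π => t * x₁.1.1 π + (1-t) * x₂.1.1 π,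
        fun π => add_nonneg (mul_nonneg ht (x₁.1.2.1 π)) (mul_nonneg h1t (x₂.1.2.1 π)), by
          rw [Finset.sum_add_distrib, ← Finset.mul_sum, ← Finset.mul_sum, x₁.1.2.2, x₂.1.2.2]
          ring⟩,
      ⟨fun j => t * x₁.2.1 j + (1-t) * x₂.2.1 j,
        fun j => add_nonneg (mul_nonneg ht (x₁.2.2.1 j)) (mul_nonneg h1t (x₂.2.2.1 j)), by
          rw [Finset.sum_add_distrib, ← Finset.mul_sum, ← Finset.mul_sum, x₁.2.2.2, x₂.2.2.2]
          ring⟩), fun a => ?_⟩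
    simp only [hf, add_mul, Finset.sum_add_distrib, mul_assoc, ← Finset.mul_sum]
    ring
  obtain ⟨x₀⟩ : Nonempty (ProbDist Pol × ProbDist ι) := inferInstance
  obtain ⟨μ, hμ_nonneg, hμ_sum, hμ_min⟩ :=
    exists_mixture f x₀ hconv (amdec γ Mdl μbar) hv
  -- construct the exploration distribution
  have hHne : ((H:ℝ)+1) ≠ 0 := by positivity
  have hpe_ex : ∃ pe : ProbDist Pol, ∀ π' : Pol,
      pe.1 π' = (∑ h : Fin (H+1), ∑ a : ι × Pol,
        if est h a.2 = π' then μ a else 0) / ((H:ℝ)+1) := by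
    refine ⟨⟨fun π' => (∑ h : Fin (H+1), ∑ a : ι × Pol,
        if est h a.2 = π' then μ a else 0) / ((H:ℝ)+1), fun π' => ?_, ?_⟩, fun π' => rfl⟩
    · refine div_nonneg ?_ (by positivity)
      refine Finset.sum_nonneg fun h _ => Finset.sum_nonneg fun a _ => ?_
      split
      · exact hμ_nonneg a
      · exact le_rfl
    · rw [← Finset.sum_div, div_eq_one_iff_eq hHne]
      have hinner : ∀ h : Fin (H+1),
          (∑ π' : Pol, ∑ a : ι × Pol, if est h a.2 = π' then μ a else 0) = 1 := by
        intro h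
        rw [Finset.sum_comm]
        calc (∑ a : ι × Pol, ∑ π' : Pol, if est h a.2 = π' then μ a else 0)
            = ∑ a : ι × Pol, μ a := Finset.sum_congr rfl fun a _ => by
              rw [Finset.sum_ite_eq]; simp
          _ = 1 := hμ_sum
      calc (∑ π' : Pol, ∑ h : Fin (H+1), ∑ a : ι × Pol, if est h a.2 = π' then μ a else 0)
          = ∑ h : Fin (H+1), ∑ π' : Pol, ∑ a : ι × Pol, if est h a.2 = π' then μ a else 0 :=
            Finset.sum_comm
        _ = ∑ _h : Fin (H+1), (1:ℝ) := Finset.sum_congr rfl fun h _ => hinner h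
        _ = (H:ℝ)+1 := by
            rw [Finset.sum_const, Finset.card_univ, Fintype.card_fin, nsmul_eq_mul, mul_one]
            push_cast; ring
  obtain ⟨pe, hpe⟩ := hpe_ex
  -- key identity relating pe to the estimation policies
  have hIdent : ∀ i j : ι,
      (∑ h : Fin (H+1), ∑ a : ι × Pol, μ a * DRL2 (Mdl i) (Mdl j) (est h a.2))
        = ((H:ℝ)+1) * ∑ π' : Pol, pe.1 π' * DRL2 (Mdl i) (Mdl j) π' := by
    intro i j
    have key : (∑ π' : Pol, pe.1 π' * DRL2 (Mdl i) (Mdl j) π')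
        = (∑ h : Fin (H+1), ∑ a : ι × Pol,
            μ a * DRL2 (Mdl i) (Mdl j) (est h a.2)) / ((H:ℝ)+1) := by
      calc (∑ π' : Pol, pe.1 π' * DRL2 (Mdl i) (Mdl j) π')
          = ∑ π' : Pol, (∑ h : Fin (H+1), ∑ a : ι × Pol,
              if est h a.2 = π' then μ a else 0) * DRL2 (Mdl i) (Mdl j) π' / ((H:ℝ)+1) := by
            refine Finset.sum_congr rfl fun π' _ => ?_
            rw [hpe π', div_mul_eq_mul_div]
        _ = (∑ π' : Pol, (∑ h : Fin (H+1), ∑ a : ι × Pol,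
              if est h a.2 = π' then μ a else 0) * DRL2 (Mdl i) (Mdl j) π') / ((H:ℝ)+1) := by
            rw [Finset.sum_div]
        _ = (∑ h : Fin (H+1), ∑ a : ι × Pol,
              μ a * DRL2 (Mdl i) (Mdl j) (est h a.2)) / ((H:ℝ)+1) := by
            congr 1
            calc (∑ π' : Pol, (∑ h : Fin (H+1), ∑ a : ι × Pol,
                  if est h a.2 = π' then μ a else 0) * DRL2 (Mdl i) (Mdl j) π')
                = ∑ π' : Pol, ∑ h : Fin (H+1), ∑ a : ι × Pol,
                    (if est h a.2 = π' then μ a else 0) * DRL2 (Mdl i) (Mdl j) π' := by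
                  simp only [Finset.sum_mul]
              _ = ∑ h : Fin (H+1), ∑ π' : Pol, ∑ a : ι × Pol,
                    (if est h a.2 = π' then μ a else 0) * DRL2 (Mdl i) (Mdl j) π' :=
                  Finset.sum_comm
              _ = ∑ h : Fin (H+1), ∑ a : ι × Pol, ∑ π' : Pol,
                    (if est h a.2 = π' then μ a else 0) * DRL2 (Mdl i) (Mdl j) π' :=
                  Finset.sum_congr rfl fun h _ => Finset.sum_comm
              _ = ∑ h : Fin (H+1), ∑ a : ι × Pol, μ a * DRL2 (Mdl i) (Mdl j) (est h a.2) := by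
                  refine Finset.sum_congr rfl fun h _ => Finset.sum_congr rfl fun a _ => ?_
                  simp only [ite_mul, zero_mul]
                  rw [Finset.sum_ite_eq]
                  simp
    rw [key, mul_comm ((H:ℝ)+1) _, div_mul_cancel₀ _ hHne]
  -- marginal of μ on models
  set m : ι → ℝ := fun i => ∑ pb : Pol, μ (i, pb) with hm
  have hm_nonneg : ∀ i, 0 ≤ m i := fun i => Finset.sum_nonneg fun pb _ => hμ_nonneg _
  -- the key per-(j,h) decoupling bound
  have hK : ∀ (j : ι) (h : Fin (H+1)),
      (∑ a : ι × Pol, μ a * ∑ τ, (dEst h j a.2).1 τ * |g h a.1 j τ|)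
        ≤ dcG g h j η
          + η * (L^2 * ∑ i, m i * ∑ a : ι × Pol,
              μ a * DRL2 (Mdl i) (Mdl j) (est h a.2)) := by
    intro j h
    have hν_ex : ∃ ν : ProbDist (ι × Tidx h),
        ∀ p : ι × Tidx h, ν.1 p = ∑ pb : Pol, μ (p.1, pb) * (dEst h j pb).1 p.2 := by
      refine ⟨⟨fun p => ∑ pb : Pol, μ (p.1, pb) * (dEst h j pb).1 p.2,
        fun p => Finset.sum_nonneg fun pb _ =>
          mul_nonneg (hμ_nonneg _) ((dEst h j pb).2.1 _), ?_⟩, fun p => rfl⟩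
      rw [Fintype.sum_prod_type]
      have hrow : ∀ i : ι, (∑ τ : Tidx h, ∑ pb : Pol, μ (i,pb) * (dEst h j pb).1 τ)
          = ∑ pb : Pol, μ (i,pb) := by
        intro i
        rw [Finset.sum_comm]
        exact Finset.sum_congr rfl fun pb _ => by
          rw [← Finset.mul_sum, (dEst h j pb).2.2, mul_one]
      rw [Finset.sum_congr rfl fun i _ => hrow i, ← Fintype.sum_prod_type]
      exact hμ_sum
    obtain ⟨ν, hν⟩ := hν_ex
    have hA : (∑ p, ν.1 p * |g h p.1 j p.2|)
        = ∑ a : ι × Pol, μ a * ∑ τ, (dEst h j a.2).1 τ * |g h a.1 j τ| := by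
      rw [Fintype.sum_prod_type, Fintype.sum_prod_type]
      refine Finset.sum_congr rfl fun i _ => ?_
      simp only [hν, Finset.sum_mul, Finset.mul_sum]
      rw [Finset.sum_comm]
      exact Finset.sum_congr rfl fun pb _ => Finset.sum_congr rfl fun τ _ => by ring
    have hmi : ∀ i : ι, (∑ τ : Tidx h, ν.1 (i,τ)) = m i := by
      intro i
      simp only [hν, hm]
      rw [Finset.sum_comm]
      exact Finset.sum_congr rfl fun pb _ => by
        rw [← Finset.mul_sum, (dEst h j pb).2.2, mul_one]
    have hinner : ∀ i : ι, (∑ q : ι × Tidx h, ν.1 q * (g h i j q.2)^2)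
        ≤ L^2 * ∑ a : ι × Pol, μ a * DRL2 (Mdl i) (Mdl j) (est h a.2) := by
      intro i
      calc (∑ q : ι × Tidx h, ν.1 q * (g h i j q.2)^2)
          = ∑ a : ι × Pol, μ a * ∑ τ, (dEst h j a.2).1 τ * (g h i j τ)^2 := by
            rw [Fintype.sum_prod_type, Fintype.sum_prod_type]
            refine Finset.sum_congr rfl fun i' _ => ?_
            simp only [hν, Finset.sum_mul, Finset.mul_sum]
            rw [Finset.sum_comm]
            exact Finset.sum_congr rfl fun pb _ => Finset.sum_congr rfl fun τ _ => by ring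
        _ ≤ ∑ a : ι × Pol, μ a * (L^2 * DRL2 (Mdl i) (Mdl j) (est h a.2)) :=
            Finset.sum_le_sum fun a _ =>
              mul_le_mul_of_nonneg_left (hrep2 h i j a.2) (hμ_nonneg a)
        _ = L^2 * ∑ a : ι × Pol, μ a * DRL2 (Mdl i) (Mdl j) (est h a.2) := by
            rw [Finset.mul_sum]
            exact Finset.sum_congr rfl fun a _ => by ring
    have hQ : (∑ p, ∑ q, ν.1 p * ν.1 q * (g h p.1 j q.2)^2)
        ≤ L^2 * ∑ i, m i * ∑ a : ι × Pol, μ a * DRL2 (Mdl i) (Mdl j) (est h a.2) := by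
      calc (∑ p, ∑ q, ν.1 p * ν.1 q * (g h p.1 j q.2)^2)
          = ∑ p : ι × Tidx h, ν.1 p * ∑ q, ν.1 q * (g h p.1 j q.2)^2 := by
            refine Finset.sum_congr rfl fun p _ => ?_
            rw [Finset.mul_sum]
            exact Finset.sum_congr rfl fun q _ => by ring
        _ ≤ ∑ p : ι × Tidx h, ν.1 p * (L^2 * ∑ a : ι × Pol,
              μ a * DRL2 (Mdl p.1) (Mdl j) (est h a.2)) :=
            Finset.sum_le_sum fun p _ =>
              mul_le_mul_of_nonneg_left (hinner p.1) (ν.2.1 p)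
        _ = ∑ i, (∑ τ : Tidx h, ν.1 (i,τ)) * (L^2 * ∑ a : ι × Pol,
              μ a * DRL2 (Mdl i) (Mdl j) (est h a.2)) := by
            rw [Fintype.sum_prod_type]
            refine Finset.sum_congr rfl fun i _ => ?_
            rw [Finset.sum_mul]
        _ = L^2 * ∑ i, m i * ∑ a : ι × Pol, μ a * DRL2 (Mdl i) (Mdl j) (est h a.2) := by
            rw [Finset.mul_sum]
            refine Finset.sum_congr rfl fun i _ => ?_
            rw [hmi i]; ring
    have h1 : (∑ a : ι × Pol, μ a * ∑ τ, (dEst h j a.2).1 τ * |g h a.1 j τ|)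
        - η * (∑ p, ∑ q, ν.1 p * ν.1 q * (g h p.1 j q.2)^2) ≤ dcG g h j η := by
      rw [← hA]; exact hdc_ge h j ν
    have h2 : η * (∑ p, ∑ q, ν.1 p * ν.1 q * (g h p.1 j q.2)^2)
        ≤ η * (L^2 * ∑ i, m i * ∑ a : ι × Pol, μ a * DRL2 (Mdl i) (Mdl j) (est h a.2)) :=
      mul_le_mul_of_nonneg_left hQ hηpos.le
    linarith
  -- evaluate the mixture bound at (pe, μbar)
  have hmain := hμ_min (pe, μbar)
  have hWsplit : (∑ a : ι × Pol, μ a * f (pe, μbar) a)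
      = (∑ a : ι × Pol, μ a * ∑ j, μbar.1 j * DRLtilde (Mdl a.1) (Mdl j) a.2)
        - γ * ∑ a : ι × Pol, μ a * ∑ π, pe.1 π * ∑ j, μbar.1 j * DRL2 (Mdl a.1) (Mdl j) π := by
    simp only [hf]
    rw [Finset.mul_sum, ← Finset.sum_sub_distrib]
    exact Finset.sum_congr rfl fun a _ => by ring
  have hT2 : (∑ a : ι × Pol, μ a * ∑ π, pe.1 π * ∑ j, μbar.1 j * DRL2 (Mdl a.1) (Mdl j) π)
      = ∑ i, m i * ∑ π, pe.1 π * ∑ j, μbar.1 j * DRL2 (Mdl i) (Mdl j) π := by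
    rw [Fintype.sum_prod_type]
    refine Finset.sum_congr rfl fun i _ => ?_
    simp only [hm]
    rw [Finset.sum_mul]
  set Qstar : ℝ := ∑ i, m i * ∑ π, pe.1 π * ∑ j, μbar.1 j * DRL2 (Mdl i) (Mdl j) π with hQstar
  have hQstar_nonneg : 0 ≤ Qstar :=
    Finset.sum_nonneg fun i _ => mul_nonneg (hm_nonneg i) <|
      Finset.sum_nonneg fun π _ => mul_nonneg (pe.2.1 π) <|
        Finset.sum_nonneg fun j _ => mul_nonneg (μbar.2.1 j) (DRL2_nonneg _ _ _)
  -- bound the first term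
  have step1 : (∑ a : ι × Pol, μ a * ∑ j, μbar.1 j * DRLtilde (Mdl a.1) (Mdl j) a.2)
      ≤ ∑ j, μbar.1 j * ∑ h : Fin (H+1), ∑ a : ι × Pol,
          μ a * ∑ τ, (dEst h j a.2).1 τ * |g h a.1 j τ| := by
    have hb : ∀ a : ι × Pol, (∑ j, μbar.1 j * DRLtilde (Mdl a.1) (Mdl j) a.2)
        ≤ ∑ j, μbar.1 j * ∑ h : Fin (H+1), ∑ τ, (dEst h j a.2).1 τ * |g h a.1 j τ| :=
      fun a => Finset.sum_le_sum fun j _ =>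
        mul_le_mul_of_nonneg_left (hrep1 a.1 j a.2) (μbar.2.1 j)
    calc (∑ a : ι × Pol, μ a * ∑ j, μbar.1 j * DRLtilde (Mdl a.1) (Mdl j) a.2)
        ≤ ∑ a : ι × Pol, μ a * ∑ j, μbar.1 j * ∑ h : Fin (H+1), ∑ τ,
            (dEst h j a.2).1 τ * |g h a.1 j τ| :=
          Finset.sum_le_sum fun a _ => mul_le_mul_of_nonneg_left (hb a) (hμ_nonneg a)
      _ = ∑ j, μbar.1 j * ∑ a : ι × Pol, μ a * ∑ h : Fin (H+1), ∑ τ,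
            (dEst h j a.2).1 τ * |g h a.1 j τ| := sum_swap_mul _ _ _
      _ = ∑ j, μbar.1 j * ∑ h : Fin (H+1), ∑ a : ι × Pol,
            μ a * ∑ τ, (dEst h j a.2).1 τ * |g h a.1 j τ| := by
          refine Finset.sum_congr rfl fun j _ => ?_
          rw [mul_sum_swap]
  have step2 : (∑ j, μbar.1 j * ∑ h : Fin (H+1), ∑ a : ι × Pol,
        μ a * ∑ τ, (dEst h j a.2).1 τ * |g h a.1 j τ|)
      ≤ (∑ j, μbar.1 j * ∑ h : Fin (H+1), (dcG g h j η
          + η * (L^2 * ∑ i, m i * ∑ a : ι × Pol,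
              μ a * DRL2 (Mdl i) (Mdl j) (est h a.2)))) :=
    Finset.sum_le_sum fun j _ => mul_le_mul_of_nonneg_left
      (Finset.sum_le_sum fun h _ => hK j h) (μbar.2.1 j)
  -- split the right-hand side of step2
  have step3 : (∑ j, μbar.1 j * ∑ h : Fin (H+1), (dcG g h j η
        + η * (L^2 * ∑ i, m i * ∑ a : ι × Pol,
            μ a * DRL2 (Mdl i) (Mdl j) (est h a.2))))
      = (∑ j, μbar.1 j * ∑ h : Fin (H+1), dcG g h j η)
        + η * L^2 * ∑ j, μbar.1 j * ∑ h : Fin (H+1), ∑ i,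
            m i * ∑ a : ι × Pol, μ a * DRL2 (Mdl i) (Mdl j) (est h a.2) := by
    rw [Finset.mul_sum (a := η * L^2)]
    rw [← Finset.sum_add_distrib]
    refine Finset.sum_congr rfl fun j _ => ?_
    rw [Finset.sum_add_distrib, mul_add]
    congr 1
    rw [Finset.mul_sum, Finset.mul_sum, Finset.mul_sum]
    exact Finset.sum_congr rfl fun h _ => by ring
  -- bound the dc part
  have step4 : (∑ j, μbar.1 j * ∑ h : Fin (H+1), dcG g h j η) ≤ ((H:ℝ)+1) * Dsup := by
    calc (∑ j, μbar.1 j * ∑ h : Fin (H+1), dcG g h j η)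
        ≤ ∑ j, μbar.1 j * (((H:ℝ)+1) * Dsup) := by
          refine Finset.sum_le_sum fun j _ => mul_le_mul_of_nonneg_left ?_ (μbar.2.1 j)
          calc (∑ h : Fin (H+1), dcG g h j η) ≤ ∑ _h : Fin (H+1), Dsup :=
                Finset.sum_le_sum fun h _ => hdc_le_D j h
            _ = ((H:ℝ)+1) * Dsup := by
                rw [Finset.sum_const, Finset.card_univ, Fintype.card_fin, nsmul_eq_mul]
                push_cast; ring
      _ = ((H:ℝ)+1) * Dsup := by rw [← Finset.sum_mul, μbar.2.2, one_mul]
  -- rewrite the quadratic part via the identity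
  have step5 : (∑ j, μbar.1 j * ∑ h : Fin (H+1), ∑ i,
        m i * ∑ a : ι × Pol, μ a * DRL2 (Mdl i) (Mdl j) (est h a.2))
      = ((H:ℝ)+1) * Qstar := by
    have swap_h : ∀ j : ι, (∑ h : Fin (H+1), ∑ i,
        m i * ∑ a : ι × Pol, μ a * DRL2 (Mdl i) (Mdl j) (est h a.2))
        = ∑ i, m i * ∑ h : Fin (H+1), ∑ a : ι × Pol,
            μ a * DRL2 (Mdl i) (Mdl j) (est h a.2) := by
      intro j
      rw [← mul_sum_swap (fun i => m i) (fun i h => ∑ a : ι × Pol,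
        μ a * DRL2 (Mdl i) (Mdl j) (est h a.2))]
    calc (∑ j, μbar.1 j * ∑ h : Fin (H+1), ∑ i,
          m i * ∑ a : ι × Pol, μ a * DRL2 (Mdl i) (Mdl j) (est h a.2))
        = ∑ j, μbar.1 j * ∑ i, m i * (((H:ℝ)+1) *
            ∑ π' : Pol, pe.1 π' * DRL2 (Mdl i) (Mdl j) π') := by
          refine Finset.sum_congr rfl fun j _ => ?_
          rw [swap_h j]
          congr 1
          exact Finset.sum_congr rfl fun i _ => by rw [hIdent i j]
      _ = ((H:ℝ)+1) * ∑ j, μbar.1 j * ∑ i, m i *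
            ∑ π' : Pol, pe.1 π' * DRL2 (Mdl i) (Mdl j) π' := by
          rw [Finset.mul_sum]
          refine Finset.sum_congr rfl fun j _ => ?_
          rw [Finset.mul_sum, Finset.mul_sum, Finset.mul_sum]
          exact Finset.sum_congr rfl fun i _ => by ring
      _ = ((H:ℝ)+1) * ∑ i, m i * ∑ j, μbar.1 j *
            ∑ π' : Pol, pe.1 π' * DRL2 (Mdl i) (Mdl j) π' := by
          rw [sum_swap_mul]
      _ = ((H:ℝ)+1) * Qstar := by
          rw [hQstar]
          congr 1
          refine Finset.sum_congr rfl fun i _ => ?_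
          congr 1
          rw [sum_swap_mul]
  -- numeric facts
  have hηL : η * L^2 = γ / (2*(H:ℝ)) := by
    rw [hηdef]
    field_simp
  have hkey : η * L^2 * (((H:ℝ)+1) * Qstar) ≤ γ * Qstar := by
    rw [hηL]
    have h1 : γ / (2*(H:ℝ)) * ((H:ℝ)+1) ≤ γ := by
      rw [div_mul_eq_mul_div, div_le_iff₀ (by positivity)]
      nlinarith
    calc γ / (2*(H:ℝ)) * (((H:ℝ)+1) * Qstar) = (γ / (2*(H:ℝ)) * ((H:ℝ)+1)) * Qstar := by ring
      _ ≤ γ * Qstar := mul_le_mul_of_nonneg_right h1 hQstar_nonneg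
  have hfinal : ((H:ℝ)+1) * Dsup ≤ 2 * (H:ℝ) * Dsup :=
    mul_le_mul_of_nonneg_right (by linarith) hD_nonneg
  -- put everything together
  have hchain : (∑ a : ι × Pol, μ a * f (pe, μbar) a) ≤ 2 * (H:ℝ) * Dsup := by
    rw [hWsplit, hT2]
    have := step1.trans (step2.trans_eq step3)
    rw [step5] at this
    linarith
  exact hmain.trans hchain
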